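/- For a symmetric positive definite matrix $P$ and any invertible matrix $A$, the AIRM squared distance $d^2(P,Q) = \|\log(P^{-1/2}QP^{-1/2})\|_F^2$ is invariant under congruence: $d(APA^T, AQA^T) = d(P,Q)$ for all symmetric positive definite $P, Q$. -/

import Mathlib

/-!
With `S = P^{1/2}` and `R = (A P Aᵀ)^{1/2}`, the matrix `T = R⁻¹ A S` is orthogonal, and
`R⁻¹ (A Q Aᵀ) R⁻¹ = T (S⁻¹ Q S⁻¹) Tᵀ`. The matrix logarithm, being a continuous functional
calculus, commutes with orthogonal conjugation, and the Frobenius norm is invariant under it.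
-/

open Matrix
open scoped Classical

variable {n : ℕ}

/-- Matrix logarithm via spectral calculus (hermitian input; junk value `0` otherwise). -/
noncomputable def matLog (A : Matrix (Fin n) (Fin n) ℝ) : Matrix (Fin n) (Fin n) ℝ :=
  if h : A.IsHermitian then
    h.eigenvectorUnitary.1 * Matrix.diagonal (Real.log ∘ h.eigenvalues) *
      (star h.eigenvectorUnitary : Matrix (Fin n) (Fin n) ℝ)
  else 0

/-- Positive semidefinite square root (junk value `0` otherwise). -/
noncomputable def matSqrt (A : Matrix (Fin n) (Fin n) ℝ) : Matrix (Fin n) (Fin n) ℝ :=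
  if h : A.PosSemidef then
    h.1.eigenvectorUnitary.1 * Matrix.diagonal (Real.sqrt ∘ h.1.eigenvalues) *
      (star h.1.eigenvectorUnitary : Matrix (Fin n) (Fin n) ℝ)
  else 0

/-- Real matrix power `M^s = exp (s • log M)` via spectral calculus. -/
noncomputable def matPow (A : Matrix (Fin n) (Fin n) ℝ) (s : ℝ) : Matrix (Fin n) (Fin n) ℝ :=
  NormedSpace.exp (s • matLog A)

/-- AIRM geodesic `γ(s) = C^{1/2} (C^{-1/2} A C^{-1/2})^s C^{1/2}`. -/
noncomputable def airmGeodesic (C A : Matrix (Fin n) (Fin n) ℝ) (s : ℝ) :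
    Matrix (Fin n) (Fin n) ℝ :=
  matSqrt C * matPow ((matSqrt C)⁻¹ * A * (matSqrt C)⁻¹) s * matSqrt C

/-- Riemannian logarithm `log_P(Q) = P^{1/2} log(P^{-1/2} Q P^{-1/2}) P^{1/2}`. -/
noncomputable def riemLog (P Q : Matrix (Fin n) (Fin n) ℝ) : Matrix (Fin n) (Fin n) ℝ :=
  matSqrt P * matLog ((matSqrt P)⁻¹ * Q * (matSqrt P)⁻¹) * matSqrt P

/-- Frobenius norm of a real matrix. -/
noncomputable def frobNorm {p : ℕ} (X : Matrix (Fin p) (Fin p) ℝ) : ℝ :=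
  Real.sqrt ((Xᵀ * X).trace)

/-- AIRM geodesic distance `d(P,Q) = ‖log(P^{-1/2} Q P^{-1/2})‖_F`. -/
noncomputable def airmDist {p : ℕ} (P Q : Matrix (Fin p) (Fin p) ℝ) : ℝ :=
  frobNorm (matLog ((matSqrt P)⁻¹ * Q * (matSqrt P)⁻¹))

section UnitaryConjugate

variable {A : Type*} [Ring A] [StarRing A] [TopologicalSpace A] [IsTopologicalRing A]
  [Algebra ℝ A] [ContinuousFunctionalCalculus ℝ A IsSelfAdjoint] [ContinuousMap.UniqueHom ℝ A]

theorem cfc_unitary_conjugate (f : ℝ → ℝ) (a : A) (u : unitary A) :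
    cfc f ((u : A) * a * star (u : A)) = u * cfc f a * star (u : A) := by
  -- Outside the self-adjoint, continuous case both sides are the junk value `0`.
  by_cases ha : IsSelfAdjoint a
  · by_cases hf : ContinuousOn f (spectrum ℝ a)
    · have hφ : Continuous (Unitary.conjStarAlgAut ℝ A u) := by
        change Continuous fun x : A => (u : A) * x * star (u : A)
        fun_prop
      exact (StarAlgHomClass.map_cfc (S := ℝ) (Unitary.conjStarAlgAut ℝ A u) f a hf hφ).symm
    · rw [cfc_apply_of_not_continuousOn a hf, cfc_apply_of_not_continuousOn _
        (by rwa [Unitary.spectrum_star_right_conjugate]), mul_zero, zero_mul]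
  · rw [cfc_apply_of_not_predicate a ha, cfc_apply_of_not_predicate _
      (by rwa [Unitary.isUnit_coe.isSelfAdjoint_conjugate_iff]), mul_zero, zero_mul]

end UnitaryConjugate

section Congruence

variable {ι α : Type*} [Fintype ι] [DecidableEq ι] [CommRing α]

theorem inv_mul_mul_mem_orthogonalGroup {R S A : Matrix ι ι α} (hR : IsUnit R.det)
    (hRt : Rᵀ = R) (hSt : Sᵀ = S) (h : R * R = A * (S * S) * Aᵀ) :
    R⁻¹ * A * S ∈ orthogonalGroup ι α := by
  rw [mem_orthogonalGroup_iff]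
  calc R⁻¹ * A * S * (R⁻¹ * A * S)ᵀ = R⁻¹ * (A * (S * S) * Aᵀ) * R⁻¹ := by
        simp only [transpose_mul, transpose_nonsing_inv, hRt, hSt, Matrix.mul_assoc]
    _ = 1 := by
        rw [← h, ← Matrix.mul_assoc, nonsing_inv_mul _ hR, Matrix.one_mul,
          mul_nonsing_inv _ hR]

theorem inv_mul_congr_mul_inv {R S A : Matrix ι ι α} (Q : Matrix ι ι α) (hS : IsUnit S.det)
    (hRt : Rᵀ = R) (hSt : Sᵀ = S) :
    R⁻¹ * (A * Q * Aᵀ) * R⁻¹ = (R⁻¹ * A * S) * (S⁻¹ * Q * S⁻¹) * (R⁻¹ * A * S)ᵀ := by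
  have hSS : ∀ X : Matrix ι ι α, S * (S⁻¹ * X) = X := fun X => by
    rw [← Matrix.mul_assoc, mul_nonsing_inv _ hS, Matrix.one_mul]
  have hSS' : ∀ X : Matrix ι ι α, S⁻¹ * (S * X) = X := fun X => by
    rw [← Matrix.mul_assoc, nonsing_inv_mul _ hS, Matrix.one_mul]
  simp only [transpose_mul, transpose_nonsing_inv, hRt, hSt, Matrix.mul_assoc, hSS, hSS']

theorem Matrix.PosDef.mul_mul_transpose_of_isUnit_det {M A : Matrix ι ι ℝ} (hM : M.PosDef)
    (hA : IsUnit A.det) : (A * M * Aᵀ).PosDef := by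
  simpa only [conjTranspose_eq_transpose_of_trivial] using hM.mul_mul_conjTranspose_same
    (vecMul_injective_iff_isUnit.mpr ((isUnit_iff_isUnit_det A).mpr hA))

end Congruence

section SpectralCalculus

variable {p : ℕ}

theorem matLog_eq_cfc (N : Matrix (Fin p) (Fin p) ℝ) : matLog N = cfc Real.log N := by
  by_cases hN : N.IsHermitian
  · rw [hN.cfc_eq, matLog, dif_pos hN, IsHermitian.cfc]
    rfl
  · rw [matLog, dif_neg hN]
    exact (cfc_apply_of_not_predicate N hN).symm

theorem matLog_orthogonal_conj {T : Matrix (Fin p) (Fin p) ℝ}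
    (hT : T ∈ orthogonalGroup (Fin p) ℝ) (N : Matrix (Fin p) (Fin p) ℝ) :
    matLog (T * N * Tᵀ) = T * matLog N * Tᵀ := by
  have hstar : star T = Tᵀ := by
    rw [star_eq_conjTranspose, conjTranspose_eq_transpose_of_trivial]
  simpa only [matLog_eq_cfc, hstar] using cfc_unitary_conjugate Real.log N ⟨T, hT⟩

theorem matSqrt_eq_cfc {P : Matrix (Fin p) (Fin p) ℝ} (hP : P.PosSemidef) :
    matSqrt P = cfc Real.sqrt P := by
  rw [hP.1.cfc_eq, matSqrt, dif_pos hP, IsHermitian.cfc]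
  rfl

theorem transpose_matSqrt (P : Matrix (Fin p) (Fin p) ℝ) : (matSqrt P)ᵀ = matSqrt P := by
  by_cases hP : P.PosSemidef
  · have h : IsSelfAdjoint (cfc Real.sqrt P) := cfc_predicate Real.sqrt P
    rw [matSqrt_eq_cfc hP, ← conjTranspose_eq_transpose_of_trivial]
    exact h
  · rw [matSqrt, dif_neg hP, transpose_zero]

theorem matSqrt_mul_self {P : Matrix (Fin p) (Fin p) ℝ} (hP : P.PosSemidef) :
    matSqrt P * matSqrt P = P := by
  have hspec := (posSemidef_iff_isHermitian_and_spectrum_nonneg.mp hP).2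
  rw [matSqrt_eq_cfc hP, ← cfc_mul (a := P) Real.sqrt Real.sqrt,
    cfc_congr (f := fun x => √x * √x) (g := id) fun x hx => Real.mul_self_sqrt (hspec hx)]
  exact cfc_id ℝ P hP.1

theorem isUnit_det_matSqrt {P : Matrix (Fin p) (Fin p) ℝ} (hP : P.PosDef) :
    IsUnit (matSqrt P).det := by
  have h : IsUnit ((matSqrt P).det * (matSqrt P).det) := by
    rw [← det_mul, matSqrt_mul_self hP.posSemidef]
    exact isUnit_iff_ne_zero.mpr hP.det_pos.ne'
  exact isUnit_of_mul_isUnit_left h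

theorem frobNorm_orthogonal_conj {T : Matrix (Fin p) (Fin p) ℝ}
    (hT : T ∈ orthogonalGroup (Fin p) ℝ) (X : Matrix (Fin p) (Fin p) ℝ) :
    frobNorm (T * X * Tᵀ) = frobNorm X := by
  have hTT : Tᵀ * T = 1 := (mem_orthogonalGroup_iff' (Fin p) ℝ).mp hT
  have h : (T * X * Tᵀ)ᵀ * (T * X * Tᵀ) = T * (Xᵀ * X) * Tᵀ := by
    simp only [transpose_mul, transpose_transpose, Matrix.mul_assoc, ← Matrix.mul_assoc Tᵀ T, hTT,
      Matrix.one_mul]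
  rw [frobNorm, frobNorm, h, trace_mul_cycle, hTT, Matrix.one_mul]

end SpectralCalculus

theorem airmDist_congruence_invariant_general {p : ℕ} (A : Matrix (Fin p) (Fin p) ℝ)
    (hA : IsUnit A.det) (P Q : Matrix (Fin p) (Fin p) ℝ)
    (hP : P.PosDef) :
    airmDist (A * P * Aᵀ) (A * Q * Aᵀ) = airmDist P Q := by
  have hAPA : (A * P * Aᵀ).PosDef := hP.mul_mul_transpose_of_isUnit_det hA
  set S := matSqrt P
  set R := matSqrt (A * P * Aᵀ)
  have hT : R⁻¹ * A * S ∈ orthogonalGroup (Fin p) ℝ :=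
    inv_mul_mul_mem_orthogonalGroup (isUnit_det_matSqrt hAPA) (transpose_matSqrt _)
      (transpose_matSqrt P) (by rw [matSqrt_mul_self hP.posSemidef,
        matSqrt_mul_self hAPA.posSemidef])
  rw [airmDist, airmDist, inv_mul_congr_mul_inv Q (isUnit_det_matSqrt hP) (transpose_matSqrt _)
    (transpose_matSqrt P), matLog_orthogonal_conj hT, frobNorm_orthogonal_conj hT]

/-- The AIRM distance is invariant under congruence by any invertible matrix. -/
theorem airmDist_congruence_invariant {p : ℕ} (A : Matrix (Fin p) (Fin p) ℝ)
    (hA : IsUnit A.det) (P Q : Matrix (Fin p) (Fin p) ℝ)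
    (hP : P.PosDef) (hQ : Q.PosDef) :
    airmDist (A * P * Aᵀ) (A * Q * Aᵀ) = airmDist P Q :=
  airmDist_congruence_invariant_general A hA P Q hP
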